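/- For every rational number d, d times the coefficient of z² in the power series H(z)^6·H(d²z)^{-1} equals d(2d⁴−10d²+23)/15, where H(z) = C(z)/S(z) with C(z) = Σ z^k/(2k)! and S(z) = Σ z^k/(2k+1)!. -/

import Mathlib

/-!
Only 2-jets matter: `H = C · S⁻¹` has 2-jet `1 + z/3 - z²/45`, so `H⁶` has 2-jet
`1 + 2z + (23/15)z²` and `H(d²z)⁻¹` has 2-jet `1 - (d²/3)z + (2d⁴/15)z²`, and the coefficient
of `z²` in their product is `(2d⁴ - 10d² + 23)/15`.
-/

open PowerSeries

noncomputable def Cser : PowerSeries ℚ := PowerSeries.mk fun k => 1 / (2 * k).factorial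

noncomputable def Sser : PowerSeries ℚ := PowerSeries.mk fun k => 1 / (2 * k + 1).factorial

noncomputable def Hser : PowerSeries ℚ := Cser * Sser⁻¹

namespace PowerSeries

section CommSemiring

variable {R : Type*} [CommSemiring R]

theorem coeff_two_mul (f g : R⟦X⟧) :
    coeff 2 (f * g) = constantCoeff f * coeff 2 g + coeff 1 f * coeff 1 g
      + coeff 2 f * constantCoeff g := by
  simp [coeff_mul, Finset.Nat.antidiagonal_succ, add_assoc]

theorem coeff_two_pow_of_constantCoeff_eq_one {f : R⟦X⟧} (hf : constantCoeff f = 1) (n : ℕ) :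
    coeff 2 (f ^ n) = n * coeff 2 f + n.choose 2 * coeff 1 f ^ 2 := by
  induction n with
  | zero => simp
  | succ n ih =>
    rw [pow_succ, coeff_two_mul, ih, coeff_one_pow, map_pow, hf, Nat.choose_succ_succ',
      Nat.choose_one_right]
    push_cast
    ring

end CommSemiring

section Field

variable {k : Type*} [Field k] {f : k⟦X⟧}

theorem coeff_one_inv_of_constantCoeff_eq_one (hf : constantCoeff f = 1) :
    coeff 1 f⁻¹ = -coeff 1 f := by
  have h := congrArg (coeff 1) (PowerSeries.mul_inv_cancel f (by simp [hf]))
  rw [coeff_one_mul, constantCoeff_inv, hf, coeff_one] at h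
  simp only [inv_one, mul_one, one_ne_zero, if_false] at h
  linear_combination h

theorem coeff_two_inv_of_constantCoeff_eq_one (hf : constantCoeff f = 1) :
    coeff 2 f⁻¹ = coeff 1 f ^ 2 - coeff 2 f := by
  have h := congrArg (coeff 2) (PowerSeries.mul_inv_cancel f (by simp [hf]))
  rw [coeff_two_mul, coeff_one_inv_of_constantCoeff_eq_one hf, constantCoeff_inv, hf,
    coeff_one] at h
  simp only [inv_one, mul_one, one_mul, OfNat.ofNat_ne_zero, if_false] at h
  linear_combination h

end Field

end PowerSeries

theorem constantCoeff_Sser : constantCoeff Sser = 1 := by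
  simp [Sser, ← coeff_zero_eq_constantCoeff_apply]

theorem coeff_one_Sser : coeff 1 Sser = 1 / 6 := by norm_num [Sser, Nat.factorial]

theorem coeff_two_Sser : coeff 2 Sser = 1 / 120 := by norm_num [Sser, Nat.factorial]

theorem constantCoeff_Cser : constantCoeff Cser = 1 := by
  simp [Cser, ← coeff_zero_eq_constantCoeff_apply]

theorem coeff_one_Cser : coeff 1 Cser = 1 / 2 := by norm_num [Cser, Nat.factorial]

theorem coeff_two_Cser : coeff 2 Cser = 1 / 24 := by norm_num [Cser, Nat.factorial]

theorem constantCoeff_Hser : constantCoeff Hser = 1 := by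
  simp [Hser, constantCoeff_inv, constantCoeff_Cser, constantCoeff_Sser]

theorem coeff_one_Hser : coeff 1 Hser = 1 / 3 := by
  rw [Hser, coeff_one_mul, coeff_one_inv_of_constantCoeff_eq_one constantCoeff_Sser,
    constantCoeff_inv, constantCoeff_Cser, constantCoeff_Sser, coeff_one_Cser, coeff_one_Sser]
  norm_num

theorem coeff_two_Hser : coeff 2 Hser = -1 / 45 := by
  rw [Hser, coeff_two_mul, coeff_two_inv_of_constantCoeff_eq_one constantCoeff_Sser,
    coeff_one_inv_of_constantCoeff_eq_one constantCoeff_Sser, constantCoeff_inv,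
    constantCoeff_Cser, constantCoeff_Sser, coeff_one_Cser, coeff_two_Cser, coeff_one_Sser,
    coeff_two_Sser]
  norm_num

theorem signature_fourfold_in_P5 (d : ℚ) :
    d * coeff 2 (Hser ^ 6 * (PowerSeries.rescale (d ^ 2) Hser)⁻¹)
      = d * (2 * d ^ 4 - 10 * d ^ 2 + 23) / 15 := by
  have hR : constantCoeff (rescale (d ^ 2) Hser) = 1 := by
    rw [← coeff_zero_eq_constantCoeff_apply, coeff_rescale, pow_zero, one_mul,
      coeff_zero_eq_constantCoeff_apply, constantCoeff_Hser]
  rw [coeff_two_mul, coeff_two_inv_of_constantCoeff_eq_one hR,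
    coeff_one_inv_of_constantCoeff_eq_one hR, constantCoeff_inv, hR, coeff_rescale, coeff_rescale,
    coeff_two_pow_of_constantCoeff_eq_one constantCoeff_Hser, coeff_one_pow, map_pow,
    constantCoeff_Hser, coeff_one_Hser, coeff_two_Hser]
  norm_num [Nat.choose]
  ring
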